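/- The function k(ξ, η) = e^{2ξη̄ - (|ξ|² + |η|²)} · erfc(ξ + η̄)/2 is bounded on ℂ × ℂ: there exists C > 0 such that |k(ξ, η)| ≤ C for all ξ, η ∈ ℂ. -/

import Mathlib

open Complex MeasureTheory

/-- The complementary error function `erfc(z) = (2/√π) ∫_z^∞ e^{-t²} dt`, extended to the
complex plane via the contour `t = z + s`, `s ∈ (0,∞)`. -/
noncomputable def erfc (z : ℂ) : ℂ :=
  (2 / Real.sqrt Real.pi) * ∫ s in Set.Ioi (0 : ℝ), Complex.exp (-(z + s) ^ 2)

/-- The limiting edge kernel `k(ξ,η) = e^{2ξη̄ - (|ξ|²+|η|²)} erfc(ξ+η̄)/2`. -/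
noncomputable def edgeKernel (ξ η : ℂ) : ℂ :=
  Complex.exp (2 * ξ * (starRingEnd ℂ) η
      - ((‖ξ‖ ^ 2 + ‖η‖ ^ 2 : ℝ) : ℂ))
    * erfc (ξ + (starRingEnd ℂ) η) / 2

lemma erfc_abs_le (z : ℂ) : ‖erfc z‖ ≤ 2 * Real.exp (z.im ^ 2) := by
  have hπ : (0 : ℝ) < Real.sqrt Real.pi := Real.sqrt_pos.2 Real.pi_pos
  have habs : ∀ s : ℝ, ‖Complex.exp (-(z + s) ^ 2)‖
      = Real.exp (z.im ^ 2) * Real.exp (-(z.re + s) ^ 2) := by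
    intro s
    rw [Complex.norm_exp, ← Real.exp_add]
    congr 1
    simp [Complex.add_re, Complex.add_im, Complex.ofReal_re, Complex.ofReal_im, sq]
    ring
  have hint : Integrable (fun s : ℝ => Real.exp (z.im ^ 2) * Real.exp (-(z.re + s) ^ 2)) := by
    have h1 : Integrable (fun t : ℝ => Real.exp (-(1:ℝ) * t ^ 2)) :=
      integrable_exp_neg_mul_sq one_pos
    have h2 : Integrable (fun s : ℝ => Real.exp (-(1:ℝ) * (z.re + s) ^ 2)) :=
      h1.comp_add_left z.re
    simpa [neg_mul, one_mul] using h2.const_mul (Real.exp (z.im ^ 2))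
  have key : ‖∫ s in Set.Ioi (0 : ℝ), Complex.exp (-(z + s) ^ 2)‖
      ≤ Real.exp (z.im ^ 2) * Real.sqrt Real.pi := by
    calc ‖∫ s in Set.Ioi (0 : ℝ), Complex.exp (-(z + s) ^ 2)‖
        ≤ ∫ s in Set.Ioi (0 : ℝ), ‖Complex.exp (-(z + s) ^ 2)‖ :=
        norm_integral_le_integral_norm _
      _ = ∫ s in Set.Ioi (0 : ℝ), Real.exp (z.im ^ 2) * Real.exp (-(z.re + s) ^ 2) := by
        refine setIntegral_congr_fun measurableSet_Ioi fun s _ => ?_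
        simpa using habs s
      _ ≤ ∫ s : ℝ, Real.exp (z.im ^ 2) * Real.exp (-(z.re + s) ^ 2) := by
        refine setIntegral_le_integral hint (Filter.Eventually.of_forall fun s => ?_)
        positivity
      _ = Real.exp (z.im ^ 2) * ∫ s : ℝ, Real.exp (-(z.re + s) ^ 2) := by
        rw [integral_const_mul]
      _ = Real.exp (z.im ^ 2) * Real.sqrt Real.pi := by
        congr 1
        have := integral_add_left_eq_self (μ := volume) (fun t : ℝ => Real.exp (-(1:ℝ) * t ^ 2)) z.re
        simp only [neg_mul, one_mul] at this
        rw [this]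
        simpa using integral_gaussian 1
  rw [erfc, norm_mul]
  have h2 : ‖((2 : ℂ) / Real.sqrt Real.pi)‖ = 2 / Real.sqrt Real.pi := by
    rw [norm_div]
    simp [abs_of_pos hπ]
  rw [h2]
  calc 2 / Real.sqrt Real.pi * ‖∫ s in Set.Ioi (0:ℝ), Complex.exp (-(z + s) ^ 2)‖
      ≤ 2 / Real.sqrt Real.pi * (Real.exp (z.im ^ 2) * Real.sqrt Real.pi) := by
        exact mul_le_mul_of_nonneg_left key (by positivity)
    _ = 2 * Real.exp (z.im ^ 2) := by field_simp

/-- The edge kernel `k(ξ,η)` is bounded on `ℂ × ℂ`. -/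
theorem edgeKernel_bounded :
    ∃ C > 0, ∀ ξ η : ℂ, ‖edgeKernel ξ η‖ ≤ C := by
  refine ⟨1, one_pos, fun ξ η => ?_⟩
  set w : ℂ := 2 * ξ * (starRingEnd ℂ) η
      - ((‖ξ‖ ^ 2 + ‖η‖ ^ 2 : ℝ) : ℂ) with hw
  set z : ℂ := ξ + (starRingEnd ℂ) η with hz
  have hwre : w.re = -((ξ.re - η.re) ^ 2 + (ξ.im - η.im) ^ 2) := by
    have h1 : ‖ξ‖ ^ 2 = ξ.re ^ 2 + ξ.im ^ 2 := by
      rw [Complex.sq_norm, Complex.normSq_apply]; ring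
    have h2 : ‖η‖ ^ 2 = η.re ^ 2 + η.im ^ 2 := by
      rw [Complex.sq_norm, Complex.normSq_apply]; ring
    simp [hw, Complex.sub_re, Complex.mul_re, Complex.mul_im, h1, h2, ← Complex.ofReal_pow, Complex.ofReal_re]
    ring
  have hzim : z.im = ξ.im - η.im := by simp [hz, sub_eq_add_neg]
  have habs : ‖edgeKernel ξ η‖
      = Real.exp w.re * ‖erfc z‖ / 2 := by
    rw [edgeKernel, norm_div, norm_mul, Complex.norm_exp, Complex.norm_two]
  rw [habs]
  have h1 : ‖erfc z‖ ≤ 2 * Real.exp (z.im ^ 2) := erfc_abs_le z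
  have h2 : Real.exp w.re * ‖erfc z‖ / 2
      ≤ Real.exp w.re * (2 * Real.exp (z.im ^ 2)) / 2 := by
    have := mul_le_mul_of_nonneg_left h1 (Real.exp_pos w.re).le
    linarith
  refine h2.trans ?_
  have : Real.exp w.re * (2 * Real.exp (z.im ^ 2)) / 2
      = Real.exp (w.re + z.im ^ 2) := by
    rw [Real.exp_add]; ring
  rw [this]
  have hle : w.re + z.im ^ 2 ≤ 0 := by
    rw [hwre, hzim]; nlinarith [sq_nonneg (ξ.re - η.re)]
  simpa using Real.exp_le_one_iff.2 hle
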